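/- There exists a discrete-time process G = (G_n)_{n∈ℕ} with stationary increments and G_0 = 0 such that for every H > 0 the series Σ_{j=1}^∞ e^{-Hj}(G_j - G_{j-1}) diverges almost surely; hence G does not belong to 𝒢_H^d for any H > 0. -/

import Mathlib

open MeasureTheory Filter Real
open scoped ENNReal

/-- Stationary increments for a discrete-time (ℕ-indexed) process. -/
def HasStationaryIncrementsNat {Ω : Type*} [MeasurableSpace Ω] (P : Measure Ω)
    (G : ℕ → Ω → ℝ) : Prop :=
  ∀ (h : ℕ) (n : ℕ) (t : Fin n → ℕ),
    P.map (fun ω i => G (t i + h) ω - G h ω) = P.map (fun ω i => G (t i) ω - G 0 ω)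

/-!
Take `G n = ∑_{k < n} e^{ξ_k}` with `ξ_k` i.i.d. Pareto of index `r ≤ 1`. The increments are
i.i.d., so they are stationary. For `H > 0`, the events `ξ_n > (H + 1)(n + 1)` are independent
with probabilities `((H + 1)(n + 1))^{-r}`, which are not summable, so by the second
Borel–Cantelli lemma infinitely many of them occur almost surely. On each of them the term
`e^{-H(n+1)} e^{ξ_n}` of the series is at least `1`, so the series cannot converge.
-/

open ProbabilityTheory Set

namespace ProbabilityTheory

lemma paretoMeasure_Ioi {t r x : ℝ} (ht : 0 < t) (hr : 0 < r) (hx : t ≤ x) :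
    paretoMeasure t r (Ioi x) = ENNReal.ofReal ((t / x) ^ r) := by
  have hx0 : 0 < x := ht.trans_le hx
  have hint : IntegrableOn (fun y => r * t ^ r * y ^ (-(r + 1))) (Ioi x) :=
    (integrableOn_Ioi_rpow_of_lt (by linarith) hx0).const_mul _
  rw [paretoMeasure, withDensity_apply _ measurableSet_Ioi,
    setLIntegral_congr_fun measurableSet_Ioi
      (fun y (hy : x < y) => paretoPDF_of_le (hx.trans hy.le)),
    ← ofReal_integral_eq_lintegral_ofReal hint, integral_const_mul,
    integral_Ioi_rpow_of_lt (by linarith) hx0]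
  · congr 1
    rw [div_rpow ht.le hx0.le, show -(r + 1) + 1 = -r by ring, rpow_neg hx0.le]
    field_simp
  · filter_upwards [ae_restrict_mem measurableSet_Ioi] with y (hy : x < y)
    have : 0 < y := hx0.trans hy
    positivity

lemma tsum_paretoMeasure_Ioi_eq_top {r c : ℝ} (hr : 0 < r) (hr1 : r ≤ 1) (hc : 1 ≤ c) :
    ∑' n : ℕ, paretoMeasure 1 r (Ioi (c * (n + 1))) = ∞ := by
  have hc0 : 0 < c := one_pos.trans_le hc
  have hterm (n : ℕ) : paretoMeasure 1 r (Ioi (c * (n + 1))) =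
      ENNReal.ofReal (c ^ (-r) * (1 / |(n : ℝ) + 1| ^ r)) := by
    rw [paretoMeasure_Ioi one_pos hr (by nlinarith), abs_of_pos (by positivity),
      div_rpow zero_le_one (by positivity), mul_rpow hc0.le (by positivity), rpow_neg hc0.le]
    simp only [one_rpow, one_div, mul_inv]
  simp_rw [hterm]
  by_contra hfin
  have hsum : Summable fun n : ℕ => c ^ (-r) * (1 / |(n : ℝ) + 1| ^ r) :=
    (ENNReal.summable_toReal hfin).congr fun n => ENNReal.toReal_ofReal (by positivity)
  rw [summable_mul_left_iff (rpow_pos_of_pos hc0 _).ne'] at hsum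
  exact hr1.not_gt ((Real.summable_one_div_nat_add_rpow 1 r).1 hsum)

end ProbabilityTheory

lemma MeasureTheory.Measure.ae_frequently_mem_infinitePi {X : Type*} [MeasurableSpace X]
    {μ : ℕ → Measure X} [∀ n, IsProbabilityMeasure (μ n)] {t : ℕ → Set X}
    (ht : ∀ n, MeasurableSet (t n)) (hsum : ∑' n, μ n (t n) = ∞) :
    ∀ᵐ ω ∂Measure.infinitePi μ, ∃ᶠ n in atTop, ω n ∈ t n := by
  set s : ℕ → Set (ℕ → X) := fun n => {ω | ω n ∈ t n}
  have hs (n : ℕ) : MeasurableSet (s n) := measurable_pi_apply n (ht n)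
  have hμs (n : ℕ) : Measure.infinitePi μ (s n) = μ n (t n) :=
    (measurePreserving_eval_infinitePi μ n).measure_preimage (ht n).nullMeasurableSet
  have hindep : iIndepSet s (Measure.infinitePi μ) := by
    refine (iIndepSet_iff_meas_biInter hs).2 fun S => ?_
    have : (⋂ n ∈ S, s n) = Set.pi S t := by ext; simp [s]
    rw [this, Measure.infinitePi_pi μ fun n _ => ht n]
    simp only [hμs]
  have hlimsup := measure_limsup_eq_one hs hindep (by simpa only [hμs] using hsum)
  filter_upwards [(mem_ae_iff_prob_eq_one (MeasurableSet.measurableSet_limsup hs)).2 hlimsup]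
    with ω hω
  exact mem_limsup_iff_frequently_mem.mp hω

lemma tendsto_zero_of_tendsto_sum_Icc {a : ℕ → ℝ} {L : ℝ}
    (h : Tendsto (fun k => ∑ j ∈ Finset.Icc 1 k, a j) atTop (nhds L)) :
    Tendsto a atTop (nhds 0) := by
  rw [← tendsto_add_atTop_iff_nat 1]
  have hdiff := ((tendsto_add_atTop_iff_nat 1).2 h).sub h
  rw [sub_self] at hdiff
  refine hdiff.congr fun k => ?_
  rw [Finset.sum_Icc_succ_top (by omega), add_sub_cancel_left]

section PartialSumProcess

variable {X : Type*}

noncomputable def partialSumProcess (f : X → ℝ) (n : ℕ) (ω : ℕ → X) : ℝ :=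
  ∑ k ∈ Finset.range n, f (ω k)

variable {f : X → ℝ}

lemma partialSumProcess_zero (ω : ℕ → X) : partialSumProcess f 0 ω = 0 := by
  simp [partialSumProcess]

lemma measurable_partialSumProcess [MeasurableSpace X] (hf : Measurable f) (n : ℕ) :
    Measurable (partialSumProcess f n) := by
  unfold partialSumProcess
  fun_prop

lemma partialSumProcess_succ_sub (n : ℕ) (ω : ℕ → X) :
    partialSumProcess f (n + 1) ω - partialSumProcess f n ω = f (ω n) := by
  simp [partialSumProcess, Finset.sum_range_succ]

lemma partialSumProcess_add_sub (h m : ℕ) (ω : ℕ → X) :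
    partialSumProcess f (m + h) ω - partialSumProcess f h ω =
      partialSumProcess f m (fun k => ω (h + k)) := by
  rw [partialSumProcess, partialSumProcess, add_comm m h, Finset.sum_range_add_sub_sum_range]
  rfl

lemma hasStationaryIncrementsNat_partialSumProcess [MeasurableSpace X] (μ : Measure X)
    [IsProbabilityMeasure μ] (hf : Measurable f) :
    HasStationaryIncrementsNat (Measure.infinitePi fun _ : ℕ => μ) (partialSumProcess f) := by
  intro h n t
  have hshift : (Measure.infinitePi fun _ : ℕ => μ).map (fun ω k => ω (h + k)) =
      Measure.infinitePi fun _ : ℕ => μ :=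
    Measure.map_infinitePi_infinitePi_of_inj (add_right_injective h)
  have hincr : Measurable fun ω (i : Fin n) =>
      partialSumProcess f (t i) ω - partialSumProcess f 0 ω := by
    have := measurable_partialSumProcess hf
    fun_prop
  conv_rhs => rw [← hshift, Measure.map_map hincr (by fun_prop)]
  congr 1
  ext ω i
  simp [partialSumProcess_add_sub, partialSumProcess_zero]

end PartialSumProcess

theorem ae_not_tendsto_discounted_sum_partialSumProcess_exp {r H : ℝ} (hr : 0 < r)
    (hr1 : r ≤ 1) (hH : 0 < H) :
    ∀ᵐ ω ∂Measure.infinitePi (fun _ : ℕ => paretoMeasure 1 r), ¬ ∃ L : ℝ, Tendsto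
      (fun k : ℕ => ∑ j ∈ Finset.Icc 1 k, Real.exp (-H * j) *
        (partialSumProcess Real.exp j ω - partialSumProcess Real.exp (j - 1) ω))
      atTop (nhds L) := by
  have := isProbabilityMeasure_paretoMeasure one_pos hr
  filter_upwards [Measure.ae_frequently_mem_infinitePi (fun _ => measurableSet_Ioi)
    (tsum_paretoMeasure_Ioi_eq_top hr hr1 (by linarith : 1 ≤ H + 1))] with ω hfreq
  rintro ⟨L, hL⟩
  have hterm_large : ∃ᶠ n in atTop, 1 ≤ Real.exp (-H * (n + 1 : ℕ)) *
      (partialSumProcess Real.exp (n + 1) ω - partialSumProcess Real.exp (n + 1 - 1) ω) := by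
    refine hfreq.mono fun n (hn : (H + 1) * (n + 1) < ω n) => ?_
    rw [Nat.add_sub_cancel, partialSumProcess_succ_sub, ← Real.exp_add]
    exact Real.one_le_exp (by push_cast; nlinarith)
  have hterm_small := ((tendsto_add_atTop_iff_nat 1).2
    (tendsto_zero_of_tendsto_sum_Icc hL)).eventually_lt_const one_pos
  obtain ⟨n, hle, hlt⟩ := (hterm_large.and_eventually hterm_small).exists
  exact hle.not_gt hlt

/-- there exists a discrete-time stationary-increment process `G` with
`G 0 = 0` such that for every `H > 0` the series `Σ_j e^{-Hj} (G j - G (j-1))` diverges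
almost surely; hence `G ∉ 𝒢_H^d` for any `H > 0`. -/
theorem exists_stationary_increment_process_not_in_Gd :
    ∃ (Ω : Type) (_ : MeasurableSpace Ω) (P : Measure Ω),
      IsProbabilityMeasure P ∧
      ∃ G : ℕ → Ω → ℝ,
        (∀ n, Measurable (G n)) ∧ (∀ ω, G 0 ω = 0) ∧
        HasStationaryIncrementsNat P G ∧
        ∀ H : ℝ, 0 < H → ∀ᵐ ω ∂P, ¬ ∃ L : ℝ, Tendsto
          (fun k : ℕ => ∑ j ∈ Finset.Icc 1 k, Real.exp (-H * j) * (G j ω - G (j - 1) ω))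
          atTop (nhds L) := by
  have := isProbabilityMeasure_paretoMeasure one_pos (by norm_num : (0 : ℝ) < 1 / 2)
  exact ⟨ℕ → ℝ, inferInstance, Measure.infinitePi fun _ => paretoMeasure 1 (1 / 2),
    inferInstance, partialSumProcess Real.exp,
    measurable_partialSumProcess Real.measurable_exp, partialSumProcess_zero,
    hasStationaryIncrementsNat_partialSumProcess _ Real.measurable_exp,
    fun H hH => ae_not_tendsto_discounted_sum_partialSumProcess_exp (by norm_num)
      (by norm_num) hH⟩
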